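/- Radius of convergence lower bound: let K be a finite extension of ℚ₂, U, V ∈ K⟦t⟧ of t-adic valuation 1 with ‖U‖_r < ∞ and ‖V‖_s < ∞ for some positive reals r, s, and let z be the unique nonzero solution of U·(z')² = V∘z in t·K⟦t⟧. Then the radius of convergence of z is at least min( r·s²·|U'(0)|² / (‖U‖_r·‖V‖_s), r²·|U'(0)| / ‖U‖_r ). -/

import Mathlib

open PowerSeries

/-- Composition `V ∘ z` of formal power series, valid when `z` has zero constant term. -/
noncomputable def PowerSeries.compSeries {K : Type*} [NormedField K] (V z : PowerSeries K) :
    PowerSeries K :=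
  PowerSeries.mk fun n => ∑ k ∈ Finset.range (n + 1),
    (PowerSeries.coeff k V) * (PowerSeries.coeff n (z ^ k))

/-!
Write `‖f‖_R` for the Gauss norm and `u₁, v₁, z₁` for the linear coefficients. The lowest-order
coefficients of `U (z')² = V ∘ z` give `z₁ ≠ 0` and `v₁ = u₁ z₁`. Below the stated radius `R` the
linear terms dominate, `‖U‖_R = |u₁| R` and `‖V‖_{|z₁| R} = |v₁| |z₁| R`, and one shows
`‖z‖_R ≤ |z₁| R` coefficient by coefficient. If `g` is the truncation of `z` below degree `n + 2`,
the coefficients of `t^(n+2)` in `U (z')² - V ∘ z = 0` and in `U (g')² - V ∘ g` differ by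
`(2 (n + 2) - 1) u₁ z₁ z_{n+2}`, and `|2 (n + 2) - 1| = 1` since the residue characteristic is 2.
Gauss norms are ultrametric and submultiplicative and `R ‖g'‖_R ≤ ‖g‖_R`, so the Gauss norm of
`U (g')² - V ∘ g` is at most `|u₁| |z₁|² R`; dividing by `|u₁ z₁|` bounds `z_{n+2}`.
-/

theorem IsUltrametricDist.norm_sum_mul_le {M ι : Type*} [SeminormedAddCommGroup M]
    [IsUltrametricDist M] {s : Finset ι} {f : ι → M} {w C : ℝ} (hw : 0 ≤ w) (hC : 0 ≤ C)
    (h : ∀ i ∈ s, ‖f i‖ * w ≤ C) : ‖∑ i ∈ s, f i‖ * w ≤ C := by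
  rcases hw.eq_or_lt with rfl | hw
  · simpa using hC
  rw [← le_div_iff₀ hw]
  exact norm_sum_le_of_forall_le_of_nonneg (div_nonneg hC hw.le) fun i hi =>
    (le_div_iff₀ hw).2 (h i hi)

theorem IsUltrametricDist.norm_two_mul_natCast_sub_one {K : Type*} [NormedField K]
    [IsUltrametricDist K] (h2 : ‖(2 : K)‖ < 1) (n : ℕ) : ‖2 * (n : K) - 1‖ = 1 := by
  have h2n : ‖2 * (n : K)‖ < ‖(-1 : K)‖ := by
    rw [norm_mul, norm_neg, norm_one]
    nlinarith [norm_natCast_le_one K n, norm_nonneg (2 : K), norm_nonneg (n : K)]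
  rw [sub_eq_add_neg, norm_add_eq_max_of_norm_ne_norm h2n.ne, max_eq_right h2n.le, norm_neg,
    norm_one]

namespace PowerSeries

section Coefficients

variable {R : Type*} [CommRing R]

theorem coeff_add_mul_of_X_pow_dvd {a b : ℕ} {f g : R⟦X⟧} (hf : X ^ a ∣ f) (hg : X ^ b ∣ g) :
    coeff (a + b) (f * g) = coeff a f * coeff b g := by
  obtain ⟨f, rfl⟩ := hf
  obtain ⟨g, rfl⟩ := hg
  rw [mul_mul_mul_comm, ← pow_add]
  simp [coeff_X_pow_mul']

theorem coeff_pow_eq_of_X_pow_dvd_sub {n k : ℕ} {f g : R⟦X⟧} (hk : 2 ≤ k) (hf : X ∣ f)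
    (hg : X ∣ g) (h : X ^ n ∣ f - g) : coeff n (f ^ k) = coeff n (g ^ k) := by
  have hsum : X ∣ ∑ i ∈ Finset.range k, f ^ i * g ^ (k - 1 - i) := by
    refine Finset.dvd_sum fun i _ => ?_
    rcases Nat.eq_zero_or_pos i with rfl | hi
    · exact dvd_mul_of_dvd_right (dvd_pow hg (by omega)) _
    · exact dvd_mul_of_dvd_left (dvd_pow hf hi.ne') _
  have hdvd : X ^ (n + 1) ∣ f ^ k - g ^ k := by
    rw [← geom_sum₂_mul, pow_succ']
    exact mul_dvd_mul hsum h
  rw [← sub_eq_zero, ← map_sub]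
  exact X_pow_dvd_iff.mp hdvd n (Nat.lt_succ_self n)

theorem coeff_mul_derivative_sq_sub {n : ℕ} {U f g : R⟦X⟧} (hU : X ∣ U)
    (h : X ^ (n + 2) ∣ f - g) :
    coeff (n + 2) (U * d⁄dX R f ^ 2) - coeff (n + 2) (U * d⁄dX R g ^ 2) =
      coeff 1 U * (2 * coeff 1 g * (coeff (n + 2) (f - g) * (n + 2))) := by
  have hfg1 : coeff 1 f = coeff 1 g := by
    rw [← sub_eq_zero, ← map_sub]; exact X_pow_dvd_iff.mp h 1 (by omega)
  have hd : X ^ (n + 1) ∣ d⁄dX R (f - g) := X_pow_dvd_iff.mpr fun m hm => by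
    rw [coeff_derivative, X_pow_dvd_iff.mp h (m + 1) (by omega), zero_mul]
  have hsq : U * d⁄dX R f ^ 2 - U * d⁄dX R g ^ 2 =
      U * ((d⁄dX R f + d⁄dX R g) * d⁄dX R (f - g)) := by
    rw [map_sub]; ring
  have hinner := coeff_add_mul_of_X_pow_dvd (f := d⁄dX R f + d⁄dX R g) (a := 0) (by simp) hd
  have houter := coeff_add_mul_of_X_pow_dvd (f := U) (by rwa [pow_one])
    (dvd_mul_of_dvd_right hd (d⁄dX R f + d⁄dX R g))
  rw [zero_add, map_add, coeff_derivative, coeff_derivative, coeff_derivative] at hinner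
  rw [show 1 + (n + 1) = n + 2 by ring] at houter
  rw [← map_sub, hsq, houter, hinner, hfg1]
  push_cast
  ring

theorem X_pow_dvd_sub_trunc (n : ℕ) (f : R⟦X⟧) : X ^ n ∣ f - (trunc n f : R⟦X⟧) :=
  ⟨_, sub_eq_of_eq_add (eq_X_pow_mul_shift_add_trunc n f)⟩

end Coefficients

section Composition

variable {K : Type*} [NormedField K]

theorem coeff_compSeries_sub_compSeries {n : ℕ} {V f g : K⟦X⟧} (hf : X ∣ f)
    (hg : X ∣ g) (h : X ^ n ∣ f - g) :
    coeff n (V.compSeries f) - coeff n (V.compSeries g) = coeff 1 V * coeff n (f - g) := by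
  simp only [compSeries, coeff_mk, ← Finset.sum_sub_distrib, ← mul_sub]
  rcases n.eq_zero_or_pos with rfl | hn
  · simp [X_dvd_iff.mp hf, X_dvd_iff.mp hg]
  rw [Finset.sum_eq_single_of_mem 1 (by simp only [Finset.mem_range]; omega)]
  · simp
  · intro k _ hk1
    rcases k with _ | _ | k
    · simp
    · contradiction
    · rw [coeff_pow_eq_of_X_pow_dvd_sub (by omega) hf hg h, sub_self, mul_zero]

theorem coeff_mul_derivative_sq_sub_compSeries {n : ℕ} {U V f g : K⟦X⟧} (hU : X ∣ U)
    (hf : X ∣ f) (hg : X ∣ g) (h : X ^ (n + 2) ∣ f - g) :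
    coeff (n + 2) (U * d⁄dX K f ^ 2 - V.compSeries f) =
      coeff (n + 2) (U * d⁄dX K g ^ 2 - V.compSeries g) +
        (2 * (n + 2) * coeff 1 U * coeff 1 g - coeff 1 V) * coeff (n + 2) (f - g) := by
  have hderiv := coeff_mul_derivative_sq_sub hU h
  have hcomp := coeff_compSeries_sub_compSeries (V := V) hf hg h
  simp only [map_sub] at hderiv hcomp ⊢
  linear_combination hderiv - hcomp

theorem coeff_one_eq_of_mul_derivative_sq_eq_compSeries {U V z : K⟦X⟧}
    (hU0 : constantCoeff U = 0) (hz1 : coeff 1 z ≠ 0)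
    (hsol : U * d⁄dX K z ^ 2 = V.compSeries z) : coeff 1 V = coeff 1 U * coeff 1 z := by
  have hL := coeff_add_mul_of_X_pow_dvd (a := 1) (b := 0) (f := U) (g := d⁄dX K z ^ 2)
    (by rwa [pow_one, X_dvd_iff]) (by simp)
  have hz' : coeff 0 (d⁄dX K z ^ 2) = coeff 1 z ^ 2 := by
    rw [coeff_zero_eq_constantCoeff_apply, map_pow, ← coeff_zero_eq_constantCoeff_apply,
      coeff_derivative]
    simp
  have hR : coeff 1 (V.compSeries z) = coeff 1 V * coeff 1 z := by
    simp [compSeries, Finset.sum_range_succ]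
  have h := congrArg (coeff 1) hsol
  rw [add_zero] at hL
  rw [hL, hz', hR] at h
  apply mul_right_cancel₀ hz1
  linear_combination -h

theorem coeff_one_ne_zero_of_mul_derivative_sq_eq_compSeries {U V z : K⟦X⟧}
    (hU0 : constantCoeff U = 0) (hV1 : coeff 1 V ≠ 0) (hz : z ≠ 0) (hz0 : constantCoeff z = 0)
    (hsol : U * d⁄dX K z ^ 2 = V.compSeries z) : coeff 1 z ≠ 0 := by
  intro hz1
  have hord := coeff_order hz
  obtain ⟨n, hn⟩ : ∃ n, z.order.toNat = n + 2 := by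
    refine ⟨z.order.toNat - 2, ?_⟩
    have h0 : z.order.toNat ≠ 0 := fun h => hord (by rw [h, coeff_zero_eq_constantCoeff_apply, hz0])
    have h1 : z.order.toNat ≠ 1 := fun h => hord (by rw [h, hz1])
    omega
  have hdvd : X ^ (n + 2) ∣ z - 0 := by
    rw [sub_zero, X_pow_dvd_iff]
    exact fun j hj => coeff_of_lt_order_toNat j (hn ▸ hj)
  have hid := coeff_mul_derivative_sq_sub_compSeries (V := V) (X_dvd_iff.mpr hU0)
    (X_dvd_iff.mpr hz0) (dvd_zero X) hdvd
  rw [hsol, sub_self] at hid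
  have hvz : coeff 1 V * coeff (n + 2) z = 0 := by
    simpa [compSeries, zero_pow_eq, apply_ite, coeff_one] using hid
  exact hn ▸ hord <| (mul_eq_zero.mp hvz).resolve_left hV1

end Composition

section GaussNorm

variable {K : Type*} [NormedField K]

/-- `‖f‖_R ≤ A` for the Gauss norm `‖f‖_R = sup_n ‖coeff n f‖ * R ^ n`. -/
def GaussNormLE (f : K⟦X⟧) (R A : ℝ) : Prop :=
  ∀ n, ‖coeff n f‖ * R ^ n ≤ A

namespace GaussNormLE

variable {f g V : K⟦X⟧} {R A B : ℝ}

theorem nonneg (hf : GaussNormLE f R A) : 0 ≤ A := by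
  have h0 := hf 0
  rw [pow_zero, mul_one] at h0
  exact (norm_nonneg _).trans h0

theorem mono {ρ : ℝ} (hf : GaussNormLE f R A) (hρ : 0 ≤ ρ) (hρR : ρ ≤ R) :
    GaussNormLE f ρ A := fun n =>
  (mul_le_mul_of_nonneg_left (pow_le_pow_left₀ hρ hρR n) (norm_nonneg _)).trans (hf n)

theorem linear_term_dominates {ρ σ N : ℝ} (hf : GaussNormLE f ρ N) (hρ : 0 < ρ)
    (hf0 : constantCoeff f = 0) (hf1 : coeff 1 f ≠ 0) (hσ : 0 ≤ σ)
    (hNσ : N * σ ≤ ‖coeff 1 f‖ * ρ ^ 2) : GaussNormLE f σ (‖coeff 1 f‖ * σ) := by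
  have hf1' : 0 < ‖coeff 1 f‖ := norm_pos_iff.mpr hf1
  have hN : ‖coeff 1 f‖ * ρ ≤ N := by simpa using hf 1
  have hσρ : σ ≤ ρ := by nlinarith [mul_pos hf1' hρ]
  intro k
  match k with
  | 0 => simp only [coeff_zero_eq_constantCoeff_apply, hf0, norm_zero, zero_mul]; positivity
  | 1 => simp
  | k + 2 =>
    have ht : σ / ρ ≤ 1 := (div_le_one hρ).mpr hσρ
    calc ‖coeff (k + 2) f‖ * σ ^ (k + 2)
        = ‖coeff (k + 2) f‖ * ρ ^ (k + 2) * (σ / ρ) ^ (k + 2) := by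
          rw [div_pow]; field_simp
      _ ≤ N * (σ / ρ) ^ 2 :=
          mul_le_mul (hf _) (pow_le_pow_of_le_one (by positivity) ht (by omega))
            (by positivity) hf.nonneg
      _ = N * σ * σ / ρ ^ 2 := by ring
      _ ≤ ‖coeff 1 f‖ * σ := by
          rw [div_le_iff₀ (by positivity)]; nlinarith

variable [IsUltrametricDist K]

theorem sub (hf : GaussNormLE f R A) (hg : GaussNormLE g R A) (hR : 0 ≤ R) :
    GaussNormLE (f - g) R A := fun n => by
  rw [map_sub, sub_eq_add_neg]
  calc ‖coeff n f + -coeff n g‖ * R ^ n ≤ max ‖coeff n f‖ ‖-coeff n g‖ * R ^ n :=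
        mul_le_mul_of_nonneg_right (IsUltrametricDist.norm_add_le_max _ _) (by positivity)
    _ ≤ A := by
        rw [norm_neg, max_mul_of_nonneg _ _ (by positivity)]
        exact max_le (hf n) (hg n)

theorem mul (hf : GaussNormLE f R A) (hg : GaussNormLE g R B) (hR : 0 ≤ R) :
    GaussNormLE (f * g) R (A * B) := fun n => by
  rw [coeff_mul]
  refine IsUltrametricDist.norm_sum_mul_le (by positivity) (mul_nonneg hf.nonneg hg.nonneg)
    fun ⟨i, j⟩ hij => ?_
  rw [Finset.HasAntidiagonal.mem_antidiagonal] at hij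
  subst hij
  calc ‖coeff i f * coeff j g‖ * R ^ (i + j) = (‖coeff i f‖ * R ^ i) * (‖coeff j g‖ * R ^ j) := by
        rw [norm_mul, pow_add]; ring
    _ ≤ A * B := mul_le_mul (hf i) (hg j) (by positivity) hf.nonneg

theorem pow (hf : GaussNormLE f R A) (hR : 0 ≤ R) (k : ℕ) : GaussNormLE (f ^ k) R (A ^ k) := by
  induction k with
  | zero => intro n; rw [pow_zero, pow_zero, coeff_one]; split_ifs <;> simp [*]
  | succ k ih => rw [pow_succ, pow_succ]; exact ih.mul hf hR

theorem derivative (hf : GaussNormLE f R A) (hR : 0 < R) : GaussNormLE (d⁄dX K f) R (A / R) :=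
  fun n => by
  rw [coeff_derivative, le_div_iff₀ hR, norm_mul, mul_assoc, mul_assoc, ← pow_succ]
  have hn : ‖(n : K) + 1‖ ≤ 1 := mod_cast IsUltrametricDist.norm_natCast_le_one K (n + 1)
  calc ‖coeff (n + 1) f‖ * (‖(n : K) + 1‖ * R ^ (n + 1)) ≤ ‖coeff (n + 1) f‖ * R ^ (n + 1) := by
        gcongr; exact mul_le_of_le_one_left (by positivity) hn
    _ ≤ A := hf _

theorem compSeries (hV : GaussNormLE V A B) (hf : GaussNormLE f R A) (hR : 0 ≤ R) :
    GaussNormLE (V.compSeries f) R B := fun n => by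
  rw [PowerSeries.compSeries, coeff_mk]
  refine IsUltrametricDist.norm_sum_mul_le (by positivity) hV.nonneg fun k _ => ?_
  rw [norm_mul, mul_assoc]
  exact (mul_le_mul_of_nonneg_left (hf.pow hR k n) (norm_nonneg _)).trans (hV k)

end GaussNormLE

theorem gaussNormLE_trunc {f : K⟦X⟧} {R A : ℝ} {m : ℕ}
    (h : ∀ j < m, ‖coeff j f‖ * R ^ j ≤ A) (hA : 0 ≤ A) :
    GaussNormLE (trunc m f : K⟦X⟧) R A := by
  intro j
  rw [Polynomial.coeff_coe, coeff_trunc]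
  split_ifs with hj
  · exact h j hj
  · simpa using hA

end GaussNorm

theorem gaussNormLE_of_mul_derivative_sq_eq_compSeries {K : Type*} [NormedField K]
    [IsUltrametricDist K] (h2 : ‖(2 : K)‖ < 1) {U V z : K⟦X⟧} {R : ℝ} (hR : 0 < R)
    (hU0 : constantCoeff U = 0) (hU1 : coeff 1 U ≠ 0) (hz0 : constantCoeff z = 0)
    (hz1 : coeff 1 z ≠ 0) (hsol : U * d⁄dX K z ^ 2 = V.compSeries z)
    (hU : GaussNormLE U R (‖coeff 1 U‖ * R))
    (hV : GaussNormLE V (‖coeff 1 z‖ * R) (‖coeff 1 V‖ * (‖coeff 1 z‖ * R))) :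
    GaussNormLE z R (‖coeff 1 z‖ * R) := by
  have hv1 := coeff_one_eq_of_mul_derivative_sq_eq_compSeries hU0 hz1 hsol
  have huz : 0 < ‖coeff 1 U‖ * ‖coeff 1 z‖ := by positivity
  intro m
  induction m using Nat.strong_induction_on with
  | _ m ih =>
  match m, ih with
  | 0, _ => simp only [coeff_zero_eq_constantCoeff_apply, hz0, norm_zero, zero_mul]; positivity
  | 1, _ => simp
  | n + 2, ih =>
    set g := (trunc (n + 2) z : K⟦X⟧)
    have hg : GaussNormLE g R (‖coeff 1 z‖ * R) := gaussNormLE_trunc ih (by positivity)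
    have hdg : GaussNormLE (d⁄dX K g) R ‖coeff 1 z‖ := by
      simpa [hR.ne'] using hg.derivative hR
    have hD : GaussNormLE (U * d⁄dX K g ^ 2 - V.compSeries g) R
        (‖coeff 1 U‖ * ‖coeff 1 z‖ * (‖coeff 1 z‖ * R)) := by
      refine GaussNormLE.sub ?_ ?_ hR.le
      · convert hU.mul (hdg.pow hR.le 2) hR.le using 1; ring
      · convert hV.compSeries hg hR.le using 1; rw [hv1, norm_mul]
    have hg0 : constantCoeff g = 0 := by
      rw [← coeff_zero_eq_constantCoeff_apply, coeff_coe_trunc_of_lt (by omega),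
        coeff_zero_eq_constantCoeff_apply, hz0]
    have hg1 : coeff 1 g = coeff 1 z := coeff_coe_trunc_of_lt (by omega)
    have hzg : coeff (n + 2) (z - g) = coeff (n + 2) z := by
      rw [map_sub, Polynomial.coeff_coe, coeff_trunc, if_neg (by omega), sub_zero]
    have hid := coeff_mul_derivative_sq_sub_compSeries (V := V) (X_dvd_iff.mpr hU0)
      (X_dvd_iff.mpr hz0) (X_dvd_iff.mpr hg0) (X_pow_dvd_sub_trunc (n + 2) z)
    rw [hsol, sub_self, map_zero, hg1, hzg, hv1] at hid
    have hcoeff : coeff (n + 2) (U * d⁄dX K g ^ 2 - V.compSeries g) =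
        -(coeff 1 U * coeff 1 z * (2 * ((n + 2 : ℕ) : K) - 1) * coeff (n + 2) z) := by
      push_cast; linear_combination -hid
    have hkey : ‖coeff 1 U‖ * ‖coeff 1 z‖ * (‖coeff (n + 2) z‖ * R ^ (n + 2)) ≤
        ‖coeff 1 U‖ * ‖coeff 1 z‖ * (‖coeff 1 z‖ * R) := by
      calc ‖coeff 1 U‖ * ‖coeff 1 z‖ * (‖coeff (n + 2) z‖ * R ^ (n + 2))
          = ‖coeff (n + 2) (U * d⁄dX K g ^ 2 - V.compSeries g)‖ * R ^ (n + 2) := by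
            rw [hcoeff, norm_neg, norm_mul, norm_mul, norm_mul,
              IsUltrametricDist.norm_two_mul_natCast_sub_one h2]
            ring
        _ ≤ _ := hD (n + 2)
    exact le_of_mul_le_mul_left hkey huz

end PowerSeries

theorem radius_of_convergence_lower_bound_general
    {K : Type*} [NormedField K]
    (hna : IsNonarchimedean (norm : K → ℝ)) (h2 : ‖(2 : K)‖ = 1 / 2)
    (r s : ℝ) (hr : 0 < r) (hs : 0 < s)
    (U V z : PowerSeries K)
    (hU0 : constantCoeff U = 0) (hU1 : coeff 1 U ≠ 0)
    (hV0 : constantCoeff V = 0) (hV1 : coeff 1 V ≠ 0)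
    (NU NV : ℝ)
    (hNU : IsLUB (Set.range fun n : ℕ => ‖coeff n U‖ * r ^ n) NU)
    (hNV : IsLUB (Set.range fun n : ℕ => ‖coeff n V‖ * s ^ n) NV)
    (hz : z ≠ 0) (hz0 : constantCoeff z = 0)
    (hsol : U * (d⁄dX K z) ^ 2 = V.compSeries z) :
    ∀ ρ : ℝ, 0 < ρ →
      ρ < min (r * s ^ 2 * ‖coeff 1 U‖ ^ 2 / (NU * NV))
              (r ^ 2 * ‖coeff 1 U‖ / NU) →
      ∃ B : ℝ, ∀ n : ℕ, ‖coeff n z‖ * ρ ^ n ≤ B := by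
  intro ρ hρ hρR
  have := IsUltrametricDist.isUltrametricDist_of_isNonarchimedean_norm hna
  have hz1 := coeff_one_ne_zero_of_mul_derivative_sq_eq_compSeries hU0 hV1 hz hz0 hsol
  have hv1 := coeff_one_eq_of_mul_derivative_sq_eq_compSeries hU0 hz1 hsol
  have hU : GaussNormLE U r NU := fun n => hNU.1 ⟨n, rfl⟩
  have hV : GaussNormLE V s NV := fun n => hNV.1 ⟨n, rfl⟩
  have hu : 0 < ‖coeff 1 U‖ := norm_pos_iff.mpr hU1
  have hc : 0 < ‖coeff 1 z‖ := norm_pos_iff.mpr hz1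
  have hUr : ‖coeff 1 U‖ * r ≤ NU := by simpa using hU 1
  have hVs : ‖coeff 1 U‖ * ‖coeff 1 z‖ * s ≤ NV := by simpa [hv1] using hV 1
  have hNU0 : 0 < NU := hUr.trans_lt' (by positivity)
  have hNV0 : 0 < NV := hVs.trans_lt' (by positivity)
  set R := min (r * s ^ 2 * ‖coeff 1 U‖ ^ 2 / (NU * NV)) (r ^ 2 * ‖coeff 1 U‖ / NU)
  have hR : 0 < R := lt_min (by positivity) (by positivity)
  have hRU : R * NU ≤ r ^ 2 * ‖coeff 1 U‖ := (le_div_iff₀ hNU0).1 (min_le_right _ _)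
  have hRV : R * NV ≤ s ^ 2 * ‖coeff 1 U‖ := by
    have h : R * (NU * NV) ≤ r * s ^ 2 * ‖coeff 1 U‖ ^ 2 :=
      (le_div_iff₀ (by positivity)).1 (min_le_left _ _)
    nlinarith [mul_le_mul_of_nonneg_left hUr (by positivity : 0 ≤ s ^ 2 * ‖coeff 1 U‖)]
  have hUR := hU.linear_term_dominates hr hU0 hU1 hR.le (by linarith)
  have hVR := hV.linear_term_dominates hs hV0 hV1 (by positivity : 0 ≤ ‖coeff 1 z‖ * R)
    (by rw [hv1, norm_mul]; nlinarith)
  have hzR := gaussNormLE_of_mul_derivative_sq_eq_compSeries (by rw [h2]; norm_num) hR hU0 hU1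
    hz0 hz1 hsol hUR hVR
  exact ⟨_, hzR.mono hρ.le hρR.le⟩

/-- Lower bound for the radius of convergence of the solution `z` of `U·(z')² = V ∘ z`:
for every `ρ` below `min(r s² |U'(0)|² / (‖U‖_r ‖V‖_s), r² |U'(0)| / ‖U‖_r)`, the
quantities `‖coeff n z‖ ρ^n` are bounded. -/
theorem radius_of_convergence_lower_bound
    {K : Type*} [NormedField K] [Algebra ℚ_[2] K] [FiniteDimensional ℚ_[2] K]
    (hna : IsNonarchimedean (norm : K → ℝ)) (h2 : ‖(2 : K)‖ = 1 / 2)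
    (r s : ℝ) (hr : 0 < r) (hs : 0 < s)
    (U V z : PowerSeries K)
    (hU0 : constantCoeff U = 0) (hU1 : coeff 1 U ≠ 0)
    (hV0 : constantCoeff V = 0) (hV1 : coeff 1 V ≠ 0)
    (NU NV : ℝ)
    (hNU : IsLUB (Set.range fun n : ℕ => ‖coeff n U‖ * r ^ n) NU)
    (hNV : IsLUB (Set.range fun n : ℕ => ‖coeff n V‖ * s ^ n) NV)
    (hz : z ≠ 0) (hz0 : constantCoeff z = 0)
    (hsol : U * (d⁄dX K z) ^ 2 = V.compSeries z) :
    ∀ ρ : ℝ, 0 < ρ →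
      ρ < min (r * s ^ 2 * ‖coeff 1 U‖ ^ 2 / (NU * NV))
              (r ^ 2 * ‖coeff 1 U‖ / NU) →
      ∃ B : ℝ, ∀ n : ℕ, ‖coeff n z‖ * ρ ^ n ≤ B :=
  radius_of_convergence_lower_bound_general hna h2 r s hr hs U V z hU0 hU1 hV0 hV1 NU NV hNU hNV hz
    hz0 hsol
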